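/- Let $\{S_\ell\}_{\ell\ge 1}$ be a positive nondecreasing sequence, $\{b_\ell\}_{\ell\ge 1}$ and $\{k_\ell\}_{\ell\ge 1}$ nonnegative sequences, and $p>1$. Define $a_\ell := \prod_{s=1}^{\ell-1} (1+b_s)^{-1}$. If $S_{\ell+1}-S_\ell \le b_\ell S_\ell + k_\ell S_\ell^p$ for all $\ell\ge 1$, and $S_1^{1-p} + (1-p)\sum_{s=1}^{\ell-1} k_s a_{s+1}^{1-p} > 0$ for all $\ell\ge 2$, then for all $\ell\ge 2$, $S_\ell \le a_\ell^{-1} \big( S_1^{1-p} + (1-p)\sum_{s=1}^{\ell-1} k_s a_{s+1}^{1-p} \big)^{1/(1-p)}$. -/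

import Mathlib

/-!
The rescaled sequence `u ℓ = a ℓ * S ℓ` absorbs the linear term: since `a ℓ = a (ℓ + 1) * (1 + b ℓ)`
and `a` is nonincreasing, `u (ℓ + 1) - u ℓ ≤ k ℓ * a (ℓ + 1) ^ (1 - p) * u ℓ ^ p`. As in the
continuous Bernoulli equation, `u ^ (1 - p)` linearises this: by convexity of `x ↦ x ^ (1 - p)` each
step increases `u ^ (1 - p)` by at least `(1 - p) * k ℓ * a (ℓ + 1) ^ (1 - p)`. Summing these
increments bounds `u ℓ ^ (1 - p)` from below, and raising to the negative power `1 / (1 - p)` turns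
this into the upper bound for `S ℓ`.
-/

open Real Finset

theorem Real.rpow_add_mul_rpow_sub_one_mul_sub_le {c x y : ℝ} (hc : c ≤ 0) (hx : 0 < x)
    (hy : 0 < y) : x ^ c + c * x ^ (c - 1) * (y - x) ≤ y ^ c := by
  -- Bernoulli's inequality for the exponent `1 - c ≥ 1` at the point `x / y`.
  have bernoulli := one_add_mul_self_le_rpow_one_add (s := x / y - 1)
    (by linarith [div_pos hx hy]) (p := 1 - c) (by linarith)
  have hxc := rpow_pos_of_pos hx c
  have hyc := rpow_pos_of_pos hy c
  have hpow : (x / y) ^ (1 - c) = y ^ c / (x ^ c / x * y) := by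
    rw [div_rpow hx.le hy.le, rpow_sub hx, rpow_sub hy, rpow_one, rpow_one]
    field_simp
  rw [add_sub_cancel, hpow, le_div_iff₀ (by positivity)] at bernoulli
  rw [rpow_sub_one hx.ne']
  field_simp at bernoulli ⊢
  linarith

theorem Real.rpow_one_sub_add_le_of_sub_le {p x y K : ℝ} (hp : 1 ≤ p) (hx : 0 < x) (hy : 0 < y)
    (h : y - x ≤ K * x ^ p) : x ^ (1 - p) + (1 - p) * K ≤ y ^ (1 - p) := by
  have hcancel : x ^ (1 - p - 1) * x ^ p = 1 := by
    rw [← rpow_add hx, show 1 - p - 1 + p = 0 by ring, rpow_zero]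
  have hslope : (1 - p) * K ≤ (1 - p) * x ^ (1 - p - 1) * (y - x) :=
    calc (1 - p) * K = (1 - p) * x ^ (1 - p - 1) * (K * x ^ p) := by
          linear_combination -(1 - p) * K * hcancel
      _ ≤ (1 - p) * x ^ (1 - p - 1) * (y - x) :=
          mul_le_mul_of_nonpos_left h
            (mul_nonpos_of_nonpos_of_nonneg (by linarith) (rpow_pos_of_pos hx _).le)
  linarith [rpow_add_mul_rpow_sub_one_mul_sub_le (by linarith : 1 - p ≤ 0) hx hy]

theorem add_sum_Icc_le_of_add_le_succ {M : Type*} [AddCommMonoid M] [PartialOrder M]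
    [IsOrderedAddMonoid M] {f g : ℕ → M} (h : ∀ ℓ ≥ 1, f ℓ + g ℓ ≤ f (ℓ + 1)) :
    ∀ ℓ ≥ 1, f 1 + ∑ s ∈ Icc 1 (ℓ - 1), g s ≤ f ℓ := by
  intro ℓ hℓ
  induction ℓ, hℓ using Nat.le_induction with
  | base => simp
  | succ n hn ih =>
    rw [Nat.add_sub_cancel, ← Nat.sub_add_cancel hn, sum_Icc_succ_top (Nat.le_add_left 1 _),
      Nat.sub_add_cancel hn, ← add_assoc]
    exact (add_le_add_left ih _).trans (h n hn)

theorem mul_sub_mul_le_mul_rpow_of_sub_le {α β s s' κ p : ℝ} (hα : 0 < α) (hβ : 0 ≤ β)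
    (hs : 0 ≤ s) (hκ : 0 ≤ κ) (hp : 0 ≤ p) (h : s' - s ≤ β * s + κ * s ^ p) :
    α * s' - α * (1 + β) * s ≤ κ * α ^ (1 - p) * (α * (1 + β) * s) ^ p := by
  have hα_le : α ≤ α ^ (1 - p) * (α * (1 + β)) ^ p :=
    calc α = α ^ (1 - p) * α ^ p := by rw [← rpow_add hα, sub_add_cancel, rpow_one]
      _ ≤ α ^ (1 - p) * (α * (1 + β)) ^ p := by
          gcongr
          exact le_mul_of_one_le_right hα.le (by linarith)
  calc α * s' - α * (1 + β) * s ≤ κ * α * s ^ p := by nlinarith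
    _ ≤ κ * (α ^ (1 - p) * (α * (1 + β)) ^ p) * s ^ p := by gcongr
    _ = κ * α ^ (1 - p) * (α * (1 + β) * s) ^ p := by
        rw [mul_rpow (by positivity) hs]; ring

section GronwallWeight

variable {a b : ℕ → ℝ} (hb : ∀ ℓ ≥ 1, 0 ≤ b ℓ)
  (ha : ∀ ℓ, a ℓ = (∏ s ∈ Icc 1 (ℓ - 1), (1 + b s))⁻¹)
include hb ha

theorem gronwall_weight_pos (ℓ : ℕ) : 0 < a ℓ := by
  rw [ha]
  exact inv_pos.mpr <| prod_pos fun s hs ↦ by linarith [hb s (mem_Icc.mp hs).1]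

theorem gronwall_weight_eq_succ_mul {ℓ : ℕ} (hℓ : 1 ≤ ℓ) : a ℓ = a (ℓ + 1) * (1 + b ℓ) := by
  have hbℓ : 1 + b ℓ ≠ 0 := by linarith [hb ℓ hℓ]
  rw [ha, ha, Nat.add_sub_cancel, ← Nat.sub_add_cancel hℓ, prod_Icc_succ_top (Nat.le_add_left 1 _),
    Nat.sub_add_cancel hℓ, mul_inv, mul_assoc, inv_mul_cancel₀ hbℓ, mul_one]

end GronwallWeight

theorem nonlinear_discrete_gronwall_general
    (S b k : ℕ → ℝ) (p : ℝ) (hp : 1 < p)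
    (hSpos : ∀ ℓ ≥ 1, 0 < S ℓ)
    (hb : ∀ ℓ ≥ 1, 0 ≤ b ℓ)
    (hk : ∀ ℓ ≥ 1, 0 ≤ k ℓ)
    (a : ℕ → ℝ)
    (ha : ∀ ℓ, a ℓ = (∏ s ∈ Finset.Icc 1 (ℓ - 1), (1 + b s))⁻¹)
    (hrec : ∀ ℓ ≥ 1, S (ℓ + 1) - S ℓ ≤ b ℓ * S ℓ + k ℓ * S ℓ ^ p)
    (hposcond : ∀ ℓ ≥ 2,
      0 < S 1 ^ (1 - p) + (1 - p) * ∑ s ∈ Finset.Icc 1 (ℓ - 1), k s * a (s + 1) ^ (1 - p)) :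
    ∀ ℓ ≥ 2,
      S ℓ ≤ (a ℓ)⁻¹ *
        (S 1 ^ (1 - p) + (1 - p) * ∑ s ∈ Finset.Icc 1 (ℓ - 1), k s * a (s + 1) ^ (1 - p))
          ^ (1 / (1 - p)) := by
  have ha_pos := gronwall_weight_pos hb ha
  have hu_pos : ∀ ℓ ≥ 1, 0 < a ℓ * S ℓ := fun ℓ hℓ ↦ mul_pos (ha_pos ℓ) (hSpos ℓ hℓ)
  have hstep : ∀ ℓ ≥ 1, (a ℓ * S ℓ) ^ (1 - p) + (1 - p) * (k ℓ * a (ℓ + 1) ^ (1 - p))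
      ≤ (a (ℓ + 1) * S (ℓ + 1)) ^ (1 - p) := fun ℓ hℓ ↦ by
    refine rpow_one_sub_add_le_of_sub_le hp.le (hu_pos ℓ hℓ) (hu_pos _ (by omega)) ?_
    rw [gronwall_weight_eq_succ_mul hb ha hℓ]
    exact mul_sub_mul_le_mul_rpow_of_sub_le (ha_pos _) (hb ℓ hℓ) (hSpos ℓ hℓ).le (hk ℓ hℓ)
      (by linarith) (hrec ℓ hℓ)
  intro ℓ hℓ
  have hsum := add_sum_Icc_le_of_add_le_succ hstep ℓ (by omega)
  rw [← mul_sum, show a 1 = 1 by simp [ha], one_mul] at hsum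
  rw [le_inv_mul_iff₀ (ha_pos ℓ), one_div, le_rpow_inv_iff_of_neg (hu_pos ℓ (by omega))
    (hposcond ℓ hℓ) (by linarith)]
  exact hsum

/-- Nonlinear discrete Gronwall lemma with Bernoulli-type nonlinearity (Lemma 2.3). -/
theorem nonlinear_discrete_gronwall
    (S b k : ℕ → ℝ) (p : ℝ) (hp : 1 < p)
    (hSpos : ∀ ℓ ≥ 1, 0 < S ℓ)
    (hSmono : ∀ ℓ ≥ 1, S ℓ ≤ S (ℓ + 1))
    (hb : ∀ ℓ ≥ 1, 0 ≤ b ℓ)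
    (hk : ∀ ℓ ≥ 1, 0 ≤ k ℓ)
    (a : ℕ → ℝ)
    (ha : ∀ ℓ, a ℓ = (∏ s ∈ Finset.Icc 1 (ℓ - 1), (1 + b s))⁻¹)
    (hrec : ∀ ℓ ≥ 1, S (ℓ + 1) - S ℓ ≤ b ℓ * S ℓ + k ℓ * S ℓ ^ p)
    (hposcond : ∀ ℓ ≥ 2,
      0 < S 1 ^ (1 - p) + (1 - p) * ∑ s ∈ Finset.Icc 1 (ℓ - 1), k s * a (s + 1) ^ (1 - p)) :
    ∀ ℓ ≥ 2,
      S ℓ ≤ (a ℓ)⁻¹ *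
        (S 1 ^ (1 - p) + (1 - p) * ∑ s ∈ Finset.Icc 1 (ℓ - 1), k s * a (s + 1) ^ (1 - p))
          ^ (1 / (1 - p)) :=
  nonlinear_discrete_gronwall_general S b k p hp hSpos hb hk a ha hrec hposcond
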